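/- In the semigroup H, for any word U in the letters a1, a2, a3 and any i ∈ {1,2,3}: P·a_i·U·R·t_i = a_i·P·U·R·s1, and for any j ≠ i: P·a_j·U·R·t_i = a_j·P·U·s2·R. -/
import Mathlib


inductive Phi
  | L | M | P | Q | R | g | s1 | s2 | t1 | t2 | t3 | a1 | a2 | a3
deriving DecidableEq

open Phi

abbrev W0 := WithZero (FreeMonoid Phi)

def w (l : List Phi) : W0 := ((FreeMonoid.ofList l : FreeMonoid Phi) : W0)

def ai : Fin 3 → Phi
  | 0 => a1 | 1 => a2 | 2 => a3

def ti : Fin 3 → Phi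
  | 0 => t1 | 1 => t2 | 2 => t3

def si : Fin 2 → Phi
  | 0 => s1 | 1 => s2

/-- `x` is one of the letters `a1, a2, a3`. -/
def isA (x : Phi) : Prop := x = a1 ∨ x = a2 ∨ x = a3

/-- The defining relations (1)–(14) of the semigroup `H`. -/
inductive rel : W0 → W0 → Prop
  | r1L (x : Phi) : rel (w [x, L]) 0
  | r1M (x : Phi) : rel (w [x, M]) 0
  | r2 : rel (w [L]) (w [M, P, g])
  | r3 (i : Fin 3) : rel (w [g, ai i]) (w [ai i, g])
  | r4 (x : Phi) (h : ¬ isA x) : rel (w [g, x]) 0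
  | r5 (i j : Fin 3) : rel (w [ai i, g, ai j]) (w [ai i, R, s1, Q, ai j])
  | r6 (i : Fin 3) (x : Phi) (h : x = R ∨ isA x) : rel (w [ti i, x]) (w [x, ti i])
  | r7 (i : Fin 3) : rel (w [P, ai i, ti i]) (w [ai i, P, s1])
  | r8 (i j : Fin 3) (h : i ≠ j) : rel (w [P, ai j, ti i]) (w [ai j, P, s2])
  | r9 (i : Fin 3) (j : Fin 2) : rel (w [si j, ai i]) (w [ai i, si j])
  | r10 : rel (w [s1, R]) (w [R, s1])
  | r11 (i : Fin 3) : rel (w [s1, Q, ai i]) (w [ti i, ai i, Q])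
  | r12 : rel (w [P, R, s1]) 0
  | r13 (i : Fin 3) : rel (w [s2, R, ai i]) (w [ai i, s2, R])
  | r14 (i : Fin 3) : rel (w [s2, R, Q, ai i]) (w [R, ti i, ai i, Q])

/-- The congruence on the free monoid with zero generated by the relations. -/
def hCon : Con W0 := conGen rel

/-- The semigroup (with zero) `H` of the paper. -/
abbrev H := hCon.Quotient

/-- The quotient map. -/
def q : W0 →* H := hCon.mk'

/-- `l` is a word in the letters `a1, a2, a3`. -/
def Aword (l : List Phi) : Prop := ∀ x ∈ l, isA x

/-- `l` is square-free: it contains no factor `Y ++ Y` with `Y` nonempty. -/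
def SqFree (l : List Phi) : Prop := ∀ Y : List Phi, Y ≠ [] → ¬ (Y ++ Y) <:+: l

lemma w_append (l1 l2 : List Phi) : w (l1 ++ l2) = w l1 * w l2 := rfl

/-- Image of a word in H. -/
def e (l : List Phi) : H := q (w l)

lemma e_append (l1 l2 : List Phi) : e (l1 ++ l2) = e l1 * e l2 := by
  unfold e; rw [w_append, map_mul]

lemma qrel {u v : W0} (h : rel u v) : q u = q v := by
  exact (Con.eq _).mpr (ConGen.Rel.of _ _ h)

/-- If a letter `c` commutes (in H) with every letter satisfying `P'`, it commutes
with every word over such letters. -/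
lemma comm_word (c : Phi) (P' : Phi → Prop)
    (hc : ∀ x, P' x → e [c, x] = e [x, c]) :
    ∀ U : List Phi, (∀ x ∈ U, P' x) → e (c :: U) = e (U ++ [c])
  | [], _ => rfl
  | x :: U, hU => by
    have h1 : e (c :: x :: U) = e [c, x] * e U := by
      have := e_append [c, x] U; simpa using this
    have h2 : e (c :: x :: U) = e [x, c] * e U := by
      rw [h1, hc x (hU x (by simp))]
    have h3 : e (c :: U) = e (U ++ [c]) :=
      comm_word c P' hc U (fun y hy => hU y (by simp [hy]))
    have h4 : e (x :: U ++ [c]) = e [x] * e (U ++ [c]) := by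
      have := e_append [x] (U ++ [c]); simpa using this
    rw [h4, ← h3]
    have h5 : e (c :: U) = e [c] * e U := by
      have := e_append [c] U; simpa using this
    have h6 : e [x, c] = e [x] * e [c] := by
      have := e_append [x] [c]; simpa using this
    rw [h2, h5, h6, mul_assoc]
/-- for any word `U` in `a1,a2,a3`:
`P·aᵢ·U·R·tᵢ = aᵢ·P·U·R·s1`, and for `j ≠ i`, `P·aⱼ·U·R·tᵢ = aⱼ·P·U·s2·R`. -/
theorem stmt3 (U : List Phi) (hU : Aword U) (i : Fin 3) :
    q (w ([P, ai i] ++ U ++ [R, ti i])) = q (w ([ai i, P] ++ U ++ [R, s1])) ∧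
    ∀ j : Fin 3, j ≠ i →
      q (w ([P, ai j] ++ U ++ [R, ti i])) = q (w ([ai j, P] ++ U ++ [s2, R])) := by
  -- commuting facts
  have ht : ∀ (k : Fin 3) (V : List Phi), (∀ x ∈ V, x = R ∨ isA x) →
      e (ti k :: V) = e (V ++ [ti k]) := fun k V hV =>
    comm_word (ti k) (fun x => x = R ∨ isA x) (fun x hx => qrel (rel.r6 k x hx)) V hV
  have hs1 : ∀ V : List Phi, (∀ x ∈ V, x = R ∨ isA x) →
      e (s1 :: V) = e (V ++ [s1]) := fun V hV =>
    comm_word s1 (fun x => x = R ∨ isA x)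
      (fun x hx => by
        rcases hx with h | h
        · subst h; exact qrel rel.r10
        · rcases h with h | h | h <;> subst h
          · exact qrel (rel.r9 0 0)
          · exact qrel (rel.r9 1 0)
          · exact qrel (rel.r9 2 0)) V hV
  have hs2 : ∀ V : List Phi, Aword V → e (s2 :: V) = e (V ++ [s2]) := fun V hV =>
    comm_word s2 isA
      (fun x hx => by
        rcases hx with h | h | h <;> subst h
        · exact qrel (rel.r9 0 1)
        · exact qrel (rel.r9 1 1)
        · exact qrel (rel.r9 2 1)) V hV
  have hUR : ∀ x ∈ U ++ [R], x = R ∨ isA x := by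
    intro x hx
    rcases List.mem_append.mp hx with h | h
    · exact Or.inr (hU x h)
    · simp at h; exact Or.inl h
  constructor
  · -- part A
    show e ([P, ai i] ++ U ++ [R, ti i]) = e ([ai i, P] ++ U ++ [R, s1])
    have key : e ([P, ai i] ++ U ++ [R, ti i])
        = e [P, ai i] * e ((U ++ [R]) ++ [ti i]) := by
      rw [← e_append]; congr 1 <;> simp
    rw [key, ← ht i (U ++ [R]) hUR]
    have step : e [P, ai i] * e (ti i :: (U ++ [R]))
        = e ([P, ai i, ti i]) * e (U ++ [R]) := by
      rw [← e_append, ← e_append]; congr 1 <;> simp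
    rw [step]
    have r7' : e [P, ai i, ti i] = e [ai i, P, s1] := qrel (rel.r7 i)
    rw [r7']
    have split : e [ai i, P, s1] * e (U ++ [R]) = e [ai i, P] * e (s1 :: (U ++ [R])) := by
      rw [← e_append, ← e_append]; congr 1 <;> simp
    rw [split, hs1 (U ++ [R]) hUR, ← e_append]
    congr 1 <;> simp
  · intro j hj
    show e ([P, ai j] ++ U ++ [R, ti i]) = e ([ai j, P] ++ U ++ [s2, R])
    have key : e ([P, ai j] ++ U ++ [R, ti i])
        = e [P, ai j] * e ((U ++ [R]) ++ [ti i]) := by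
      rw [← e_append]; congr 1 <;> simp
    rw [key, ← ht i (U ++ [R]) hUR]
    have step : e [P, ai j] * e (ti i :: (U ++ [R]))
        = e ([P, ai j, ti i]) * e (U ++ [R]) := by
      rw [← e_append, ← e_append]; congr 1 <;> simp
    rw [step]
    have r8' : e [P, ai j, ti i] = e [ai j, P, s2] := qrel (rel.r8 i j (fun h => hj h.symm))
    rw [r8']
    have split : e [ai j, P, s2] * e (U ++ [R])
        = e [ai j, P] * (e (s2 :: U) * e [R]) := by
      rw [← e_append, ← e_append, ← e_append]; congr 1 <;> simp
    rw [split, hs2 U hU, ← e_append, ← e_append]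
    congr 1 <;> simp
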